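/- Let (X_t)_{t∈ℤ⁺} be adapted to (F_t), X_0 = 0, with increments Δ_t. Fix α ∈ (0,1], β > 0, and suppose there exists C < ∞ with E[(Δ_t⁺)^α | F_t] ≤ C a.s. for all t, and that E[(Δ_t⁻)^β | F_t] = ∞ a.s. for all t. Then for any x > 0, the first passage time τ_x = min{t : X_t ≥ x} satisfies E[τ_x^{β/α}] = ∞. -/

import Mathlib

/-!
A single downward jump of size `N = Δ₀⁻` at time `0` (with `E[N^β] = ∞`) forces a long wait.
On an `F₁`-event `A` where `X₁ ≤ -y`, reaching `x` by time `n` requires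
`Σ_{1 ≤ u < n} (Δ_u⁺)^α ≥ (x + y)^α` (subadditivity of `t ↦ t^α` for `α ≤ 1`), whereas the
conditional bound gives `E[Σ_{1 ≤ u < n} (Δ_u⁺)^α; A] ≤ n C P(A)`. For `n ≈ (x + y)^α / (2C)`
Markov's inequality leaves at least half of `A` unhit at time `n`, so `E[τ_x^{β/α}; A] ≳ y^β P(A)`.
Summing over the dyadic levels `A_j = {N ∈ [r 2^j, r 2^(j+1))}` compares `E[τ_x^{β/α}]` with
`E[N^β] = ∞`.
-/

open MeasureTheory ENNReal

theorem Real.rpow_sum_le_sum_rpow {ι : Type*} (s : Finset ι) {f : ι → ℝ}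
    (hf : ∀ i ∈ s, 0 ≤ f i) {p : ℝ} (hp : 0 < p) (hp1 : p ≤ 1) :
    (∑ i ∈ s, f i) ^ p ≤ ∑ i ∈ s, f i ^ p :=
  Finset.le_sum_of_subadditive_on_pred (· ^ p) (0 ≤ ·) (Real.zero_rpow hp.ne').le
    (fun _ _ ha hb => Real.rpow_add_le_add_rpow ha hb hp.le hp1) (fun _ _ => add_nonneg) f hf

theorem sub_le_sum_Ico_max_sub_zero (a : ℕ → ℝ) {i j : ℕ} (hij : i ≤ j) :
    a j - a i ≤ ∑ u ∈ Finset.Ico i j, max (a (u + 1) - a u) 0 :=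
  (Finset.sum_Ico_sub a hij).symm.le.trans (Finset.sum_le_sum fun _ _ => le_max_left _ _)

theorem rpow_sub_le_sum_Ico_max_sub_zero_rpow (a : ℕ → ℝ) {α : ℝ} (hα : α ∈ Set.Ioc (0 : ℝ) 1)
    {i j n : ℕ} (hij : i ≤ j) (hjn : j ≤ n) (ha : a i ≤ a j) :
    (a j - a i) ^ α ≤ ∑ u ∈ Finset.Ico i n, max (a (u + 1) - a u) 0 ^ α :=
  calc (a j - a i) ^ α ≤ (∑ u ∈ Finset.Ico i j, max (a (u + 1) - a u) 0) ^ α :=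
        Real.rpow_le_rpow (sub_nonneg.2 ha) (sub_le_sum_Ico_max_sub_zero a hij) hα.1.le
    _ ≤ ∑ u ∈ Finset.Ico i j, max (a (u + 1) - a u) 0 ^ α :=
        Real.rpow_sum_le_sum_rpow _ (fun _ _ => le_max_right _ _) hα.1 hα.2
    _ ≤ ∑ u ∈ Finset.Ico i n, max (a (u + 1) - a u) 0 ^ α :=
        Finset.sum_le_sum_of_subset_of_nonneg (Finset.Ico_subset_Ico le_rfl hjn)
          fun _ _ _ => Real.rpow_nonneg (le_max_right _ _) α

theorem setLIntegral_ofReal_le_of_condExp_le {Ω : Type*} {m m0 : MeasurableSpace Ω}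
    {μ : Measure Ω} [IsFiniteMeasure μ] (hm : m ≤ m0) {f : Ω → ℝ} (hf : Integrable f μ)
    (hf0 : 0 ≤ f) {C : ℝ} (hC : μ[f|m] ≤ᵐ[μ] fun _ => C) {A : Set Ω} (hA : MeasurableSet[m] A) :
    ∫⁻ ω in A, ENNReal.ofReal (f ω) ∂μ ≤ ENNReal.ofReal C * μ A := by
  rw [← ofReal_integral_eq_lintegral_ofReal hf.restrict (ae_of_all _ hf0),
    ← setIntegral_condExp hm hf hA]
  calc ENNReal.ofReal (∫ ω in A, (μ[f|m]) ω ∂μ) ≤ ENNReal.ofReal (∫ _ in A, C ∂μ) :=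
        ENNReal.ofReal_le_ofReal <| integral_mono_ae integrable_condExp.restrict
          (integrable_const C).restrict (ae_restrict_of_ae hC)
    _ ≤ ENNReal.ofReal C * μ A := by
        rw [setIntegral_const, smul_eq_mul, measureReal_def, mul_comm,
          ENNReal.ofReal_mul' ENNReal.toReal_nonneg, ENNReal.ofReal_toReal (measure_ne_top μ A)]

theorem pairwise_disjoint_preimage_Ico_mul_two_pow {Ω : Type*} (N : Ω → ℝ) {r : ℝ} (hr : 0 ≤ r) :
    Pairwise (Function.onFun Disjoint fun j : ℕ =>
      N ⁻¹' Set.Ico (r * 2 ^ j) (r * 2 ^ (j + 1))) := by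
  have hmono : Monotone fun j : ℕ => r * 2 ^ j := fun i j hij => by
    dsimp only
    gcongr
    norm_num
  exact fun i j hij => (hmono.pairwise_disjoint_on_Ico_succ hij).preimage N

theorem tsum_rpow_mul_measure_preimage_Ico_eq_top {Ω : Type*} {m0 : MeasurableSpace Ω}
    {μ : Measure Ω} [IsFiniteMeasure μ] {N : Ω → ℝ} (hN : Measurable N) (hN0 : 0 ≤ N)
    {β r : ℝ} (hβ : 0 ≤ β) (hr : 0 < r) (h : ∫⁻ ω, ENNReal.ofReal (N ω ^ β) ∂μ = ⊤) :
    ∑' j : ℕ, ENNReal.ofReal ((r * 2 ^ j) ^ β) * μ (N ⁻¹' Set.Ico (r * 2 ^ j) (r * 2 ^ (j + 1)))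
      = ⊤ := by
  set A : ℕ → Set Ω := fun j => N ⁻¹' Set.Ico (r * 2 ^ j) (r * 2 ^ (j + 1))
  set c : ℕ → ℝ≥0∞ := fun j => ENNReal.ofReal ((r * 2 ^ j) ^ β)
  have hA : ∀ j, MeasurableSet (A j) := fun j => hN measurableSet_Ico
  have hbound : ∀ ω, ENNReal.ofReal (N ω ^ β) ≤
      ENNReal.ofReal (r ^ β) + ENNReal.ofReal (2 ^ β) * ∑' j, (A j).indicator (fun _ => c j) ω := by
    intro ω
    rcases lt_or_ge (N ω) r with hNr | hNr
    · exact le_add_right (ENNReal.ofReal_le_ofReal (Real.rpow_le_rpow (hN0 ω) hNr.le hβ))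
    obtain ⟨j, hj1, hj2⟩ := exists_nat_pow_near ((one_le_div hr).2 hNr) one_lt_two
    have hωA : ω ∈ A j := ⟨(le_div_iff₀' hr).1 hj1, (div_lt_iff₀' hr).1 hj2⟩
    refine le_add_left ?_
    calc ENNReal.ofReal (N ω ^ β) ≤ ENNReal.ofReal ((r * 2 ^ (j + 1)) ^ β) :=
          ENNReal.ofReal_le_ofReal (Real.rpow_le_rpow (hN0 ω) hωA.2.le hβ)
      _ = ENNReal.ofReal (2 ^ β) * c j := by
          rw [← ENNReal.ofReal_mul (by positivity), ← Real.mul_rpow (by norm_num) (by positivity)]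
          ring_nf
      _ ≤ ENNReal.ofReal (2 ^ β) * ∑' j, (A j).indicator (fun _ => c j) ω := by
          gcongr
          exact (Set.indicator_of_mem hωA _).symm.le.trans
            (ENNReal.le_tsum (f := fun i => (A i).indicator (fun _ => c i) ω) j)
  have hle : ⊤ ≤
      ENNReal.ofReal (r ^ β) * μ Set.univ + ENNReal.ofReal (2 ^ β) * ∑' j, c j * μ (A j) :=
    calc ⊤ = ∫⁻ ω, ENNReal.ofReal (N ω ^ β) ∂μ := h.symm
      _ ≤ _ := lintegral_mono hbound
      _ = _ := by
          rw [lintegral_add_left measurable_const, lintegral_const,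
            lintegral_const_mul' _ _ ENNReal.ofReal_ne_top,
            lintegral_tsum fun j => (measurable_const.indicator (hA j)).aemeasurable]
          simp_rw [lintegral_indicator_const (hA _)]
  by_contra hne
  exact ENNReal.add_ne_top.2 ⟨ENNReal.mul_ne_top ENNReal.ofReal_ne_top (measure_ne_top μ _),
    ENNReal.mul_ne_top ENNReal.ofReal_ne_top hne⟩ (top_le_iff.1 hle)

theorem lintegral_eq_top_of_tsum_le_mul_setLIntegral {Ω : Type*} {m0 : MeasurableSpace Ω}
    {μ : Measure Ω} {f : Ω → ℝ≥0∞} {A : ℕ → Set Ω} (hA : ∀ j, MeasurableSet (A j))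
    (hdisj : Pairwise (Function.onFun Disjoint A)) {c : ℕ → ℝ≥0∞} (hc : ∑' j, c j = ⊤)
    {K : ℝ≥0∞} (hK : K ≠ ⊤) (hcA : ∀ j, c j ≤ K * ∫⁻ ω in A j, f ω ∂μ) :
    ∫⁻ ω, f ω ∂μ = ⊤ := by
  have hKf : K * ∫⁻ ω, f ω ∂μ = ⊤ := top_unique <|
    calc ⊤ = ∑' j, c j := hc.symm
      _ ≤ ∑' j, K * ∫⁻ ω in A j, f ω ∂μ := ENNReal.tsum_le_tsum hcA
      _ = K * ∫⁻ ω in ⋃ j, A j, f ω ∂μ := by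
          rw [ENNReal.tsum_mul_left, lintegral_iUnion hA hdisj]
      _ ≤ K * ∫⁻ ω, f ω ∂μ := mul_le_mul_right (setLIntegral_le_lintegral _ _) _
  exact ((ENNReal.mul_eq_top.1 hKf).resolve_right fun h => hK h.1).2

section FirstPassage

variable {Ω : Type*} {m0 : MeasurableSpace Ω} {μ : Measure Ω} [IsFiniteMeasure μ]
  {F : Filtration ℕ m0} {X : ℕ → Ω → ℝ} {α C : ℝ}

noncomputable def firstPassage (X : ℕ → Ω → ℝ) (x : ℝ) (ω : Ω) : ℝ≥0∞ :=
  ⨅ (t : ℕ) (_ : x ≤ X t ω), (t : ℝ≥0∞)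

theorem le_firstPassage {x : ℝ} {ω : Ω} {n : ℕ} (h : ∀ s ≤ n, X s ω < x) :
    (n : ℝ≥0∞) ≤ firstPassage X x ω :=
  le_iInf₂ fun t ht => Nat.cast_le.2 <| le_of_not_gt fun htn => (h t htn.le).not_ge ht

theorem measurableSet_forall_le_lt (hX : ∀ t, Measurable (X t)) (n : ℕ) (x : ℝ) :
    MeasurableSet {ω | ∀ s ≤ n, X s ω < x} := by
  simp only [Set.ofPred_forall]
  exact .iInter fun s => .iInter fun _ => hX s measurableSet_Iio

theorem setLIntegral_sum_Ico_le_of_condExp_le {f : ℕ → Ω → ℝ} (hf : ∀ t, Integrable (f t) μ)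
    (hf0 : ∀ t, 0 ≤ f t) (hC : ∀ t, μ[f t|F t] ≤ᵐ[μ] fun _ => C) {A : Set Ω}
    (hA : MeasurableSet[F 1] A) (n : ℕ) :
    ∫⁻ ω in A, ENNReal.ofReal (∑ u ∈ Finset.Ico 1 n, f u ω) ∂μ
      ≤ n * (ENNReal.ofReal C * μ A) := by
  calc ∫⁻ ω in A, ENNReal.ofReal (∑ u ∈ Finset.Ico 1 n, f u ω) ∂μ
      = ∑ u ∈ Finset.Ico 1 n, ∫⁻ ω in A, ENNReal.ofReal (f u ω) ∂μ := by
        simp_rw [ENNReal.ofReal_sum_of_nonneg fun u _ => hf0 u _]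
        exact lintegral_finsetSum' _ fun u _ => (hf u).aemeasurable.ennreal_ofReal.restrict
    _ ≤ ∑ _u ∈ Finset.Ico 1 n, ENNReal.ofReal C * μ A :=
        Finset.sum_le_sum fun u hu => setLIntegral_ofReal_le_of_condExp_le (F.le u) (hf u)
          (hf0 u) (hC u) (F.mono (Finset.mem_Ico.1 hu).1 _ hA)
    _ ≤ n * (ENNReal.ofReal C * μ A) := by
        rw [Finset.sum_const, Nat.card_Ico, nsmul_eq_mul]
        gcongr
        exact_mod_cast Nat.sub_le n 1

theorem measure_le_two_mul_measure_inter_forall_le_lt (hX : ∀ t, Measurable (X t))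
    (hX0 : ∀ ω, X 0 ω = 0) (hα : α ∈ Set.Ioc (0 : ℝ) 1)
    (hint : ∀ t, Integrable (fun ω => (max (X (t + 1) ω - X t ω) 0) ^ α) μ)
    (hC : ∀ t, ∀ᵐ ω ∂μ, (μ[fun ω' => (max (X (t + 1) ω' - X t ω') 0) ^ α|F t]) ω ≤ C)
    {x y : ℝ} (hx : 0 < x) (hy : 0 ≤ y) {A : Set Ω} (hA : MeasurableSet[F 1] A)
    (hAy : ∀ ω ∈ A, X 1 ω ≤ -y) {n : ℕ} (hn : n * C ≤ (x + y) ^ α / 2) :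
    μ A ≤ 2 * μ (A ∩ {ω | ∀ s ≤ n, X s ω < x}) := by
  set S := {ω | ∀ s ≤ n, X s ω < x}
  have hS : MeasurableSet S := measurableSet_forall_le_lt hX n x
  have hxy : 0 < (x + y) ^ α := Real.rpow_pos_of_pos (by linarith) α
  have hcrossing : ∀ ω ∈ A \ S,
      (x + y) ^ α ≤ ∑ u ∈ Finset.Ico 1 n, max (X (u + 1) ω - X u ω) 0 ^ α := by
    rintro ω ⟨hωA, hωS⟩
    obtain ⟨s, hsn, hxs⟩ : ∃ s ≤ n, x ≤ X s ω := by simpa [S] using hωS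
    have hs : 1 ≤ s := Nat.one_le_iff_ne_zero.2 fun h => by
      subst h; linarith [hX0 ω]
    have hy1 := hAy ω hωA
    calc (x + y) ^ α ≤ (X s ω - X 1 ω) ^ α := Real.rpow_le_rpow (by linarith) (by linarith) hα.1.le
      _ ≤ _ := rpow_sub_le_sum_Ico_max_sub_zero_rpow (X · ω) hα hs hsn (by linarith)
  have hmarkov : ENNReal.ofReal ((x + y) ^ α) * μ (A \ S)
      ≤ ENNReal.ofReal ((x + y) ^ α) * (μ A / 2) :=
    calc ENNReal.ofReal ((x + y) ^ α) * μ (A \ S)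
        = ∫⁻ _ in A \ S, ENNReal.ofReal ((x + y) ^ α) ∂μ := (setLIntegral_const _ _).symm
      _ ≤ ∫⁻ ω in A \ S, ENNReal.ofReal
            (∑ u ∈ Finset.Ico 1 n, max (X (u + 1) ω - X u ω) 0 ^ α) ∂μ :=
          setLIntegral_mono' ((F.le 1 _ hA).diff hS) fun ω hω =>
            ENNReal.ofReal_le_ofReal (hcrossing ω hω)
      _ ≤ ∫⁻ ω in A, ENNReal.ofReal
            (∑ u ∈ Finset.Ico 1 n, max (X (u + 1) ω - X u ω) 0 ^ α) ∂μ :=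
          lintegral_mono_set Set.sdiff_subset
      _ ≤ n * (ENNReal.ofReal C * μ A) :=
          setLIntegral_sum_Ico_le_of_condExp_le hint
            (fun t ω => Real.rpow_nonneg (le_max_right _ _) α) hC hA n
      _ = ENNReal.ofReal (n * C) * μ A := by
          rw [ENNReal.ofReal_mul (Nat.cast_nonneg _), ENNReal.ofReal_natCast, mul_assoc]
      _ ≤ ENNReal.ofReal ((x + y) ^ α / 2) * μ A := by gcongr
      _ = ENNReal.ofReal ((x + y) ^ α) * (μ A / 2) := by
          rw [ENNReal.ofReal_div_of_pos two_pos, ENNReal.ofReal_ofNat, div_eq_mul_inv,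
            div_eq_mul_inv]
          ring
  have hdiff : μ (A \ S) ≤ μ A / 2 :=
    (ENNReal.mul_le_mul_iff_right (ENNReal.ofReal_pos.2 hxy).ne' ENNReal.ofReal_ne_top).1 hmarkov
  have hhalf : μ A / 2 ≤ μ (A ∩ S) := by
    refine (ENNReal.add_le_add_iff_right (ENNReal.div_ne_top (measure_ne_top μ A) two_ne_zero)).1 ?_
    calc μ A / 2 + μ A / 2 = μ (A ∩ S) + μ (A \ S) := by
          rw [ENNReal.add_halves, measure_inter_add_sdiff A hS]
      _ ≤ μ (A ∩ S) + μ A / 2 := by gcongr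
  rwa [ENNReal.div_le_iff_le_mul (Or.inl two_ne_zero) (Or.inl ENNReal.ofNat_ne_top),
    mul_comm] at hhalf

theorem ofReal_rpow_mul_measure_le_setLIntegral_firstPassage (hX : ∀ t, Measurable (X t))
    (hX0 : ∀ ω, X 0 ω = 0) (hα : α ∈ Set.Ioc (0 : ℝ) 1)
    (hint : ∀ t, Integrable (fun ω => (max (X (t + 1) ω - X t ω) 0) ^ α) μ)
    (hC : ∀ t, ∀ᵐ ω ∂μ, (μ[fun ω' => (max (X (t + 1) ω' - X t ω') 0) ^ α|F t]) ω ≤ C)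
    (hC0 : 0 < C) {β : ℝ} (hβ : 0 ≤ β) {x y : ℝ} (hx : 0 < x) (hy : 0 ≤ y)
    (hyC : 4 * C ≤ y ^ α) {A : Set Ω} (hA : MeasurableSet[F 1] A)
    (hAy : ∀ ω ∈ A, X 1 ω ≤ -y) :
    ENNReal.ofReal (y ^ β) * μ A
      ≤ 2 * ENNReal.ofReal ((4 * C) ^ (β / α)) * ∫⁻ ω in A, firstPassage X x ω ^ (β / α) ∂μ := by
  set n := ⌊(x + y) ^ α / (2 * C)⌋₊
  set S := {ω | ∀ s ≤ n, X s ω < x}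
  set K := ENNReal.ofReal ((4 * C) ^ (β / α))
  have hp : 0 ≤ β / α := div_nonneg hβ hα.1.le
  have hxy : y ^ α ≤ (x + y) ^ α := Real.rpow_le_rpow hy (by linarith) hα.1.le
  have hn : n * C ≤ (x + y) ^ α / 2 := by
    have := Nat.floor_le (a := (x + y) ^ α / (2 * C)) (by positivity)
    rw [le_div_iff₀ (by positivity)] at this
    linarith
  have hyn : y ^ α ≤ 4 * C * n := by
    have := mul_lt_mul_of_pos_left (Nat.sub_one_lt_floor ((x + y) ^ α / (2 * C)))
      (by positivity : 0 < 4 * C)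
    have h2 : 4 * C * ((x + y) ^ α / (2 * C) - 1) = 2 * (x + y) ^ α - 4 * C := by
      field_simp
      ring
    linarith
  have hyβ : ENNReal.ofReal (y ^ β) ≤ K * (n : ℝ≥0∞) ^ (β / α) := by
    rw [← ENNReal.ofReal_natCast, ENNReal.ofReal_rpow_of_nonneg (Nat.cast_nonneg _) hp,
      ← ENNReal.ofReal_mul (by positivity), ← Real.mul_rpow (by positivity) (Nat.cast_nonneg _)]
    refine ENNReal.ofReal_le_ofReal ?_
    calc y ^ β = (y ^ α) ^ (β / α) := by rw [← Real.rpow_mul hy, mul_div_cancel₀ _ hα.1.ne']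
      _ ≤ (4 * C * n) ^ (β / α) := Real.rpow_le_rpow (by positivity) hyn hp
  calc ENNReal.ofReal (y ^ β) * μ A ≤ K * (n : ℝ≥0∞) ^ (β / α) * (2 * μ (A ∩ S)) :=
        mul_le_mul' hyβ
          (measure_le_two_mul_measure_inter_forall_le_lt hX hX0 hα hint hC hx hy hA hAy hn)
    _ = 2 * K * ∫⁻ _ in A ∩ S, (n : ℝ≥0∞) ^ (β / α) ∂μ := by
        rw [setLIntegral_const]
        ring
    _ ≤ 2 * K * ∫⁻ ω in A ∩ S, firstPassage X x ω ^ (β / α) ∂μ :=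
        mul_le_mul_right (setLIntegral_mono' ((F.le 1 _ hA).inter
          (measurableSet_forall_le_lt hX n x)) fun ω hω =>
            ENNReal.rpow_le_rpow (le_firstPassage hω.2) hp) _
    _ ≤ 2 * K * ∫⁻ ω in A, firstPassage X x ω ^ (β / α) ∂μ :=
        mul_le_mul_right (lintegral_mono_set Set.inter_subset_left) _

end FirstPassage

/-- Theorem 6 of the paper: non-existence of the `β/α` moment of the first
passage time `τ_x` when `E[(Δ_t⁺)^α|F_t] ≤ C` and `E[(Δ_t⁻)^β|F_t] = ∞` a.s.
The condition `E[(Δ_t⁻)^β|F_t] = ∞ a.s.` is expressed by saying that the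
integral of `(Δ_t⁻)^β` over every `F_t`-measurable set of positive measure is
infinite. -/
theorem stmt16
    {Ω : Type*} {m0 : MeasurableSpace Ω} {μ : Measure Ω} [IsProbabilityMeasure μ]
    (F : Filtration ℕ m0) (X : ℕ → Ω → ℝ) (hadapted : Adapted F X)
    (hX0 : ∀ ω, X 0 ω = 0)
    (α β C : ℝ) (hα : α ∈ Set.Ioc (0:ℝ) 1) (hβ : 0 < β)
    (hposint : ∀ t, Integrable (fun ω => (max (X (t + 1) ω - X t ω) 0) ^ α) μ)
    (hpos : ∀ t, ∀ᵐ ω ∂μ,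
      (μ[fun ω' => (max (X (t + 1) ω' - X t ω') 0) ^ α|F t]) ω ≤ C)
    (hneg : ∀ t, ∀ A : Set Ω, MeasurableSet[F t] A → 0 < μ A →
      ∫⁻ ω in A, ENNReal.ofReal ((max (-(X (t + 1) ω - X t ω)) 0) ^ β) ∂μ = ⊤)
    (x : ℝ) (hx : 0 < x) :
    ∫⁻ ω, (⨅ (t : ℕ) (_ : x ≤ X t ω), (t : ℝ≥0∞)) ^ (β / α) ∂μ = ⊤ := by
  obtain ⟨C', hC'0, hC'⟩ : ∃ C' > 0, ∀ t, ∀ᵐ ω ∂μ,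
      (μ[fun ω' => (max (X (t + 1) ω' - X t ω') 0) ^ α|F t]) ω ≤ C' :=
    ⟨max C 1, by positivity, fun t => (hpos t).mono fun _ h => h.trans (le_max_left _ _)⟩
  have hX : ∀ t, Measurable (X t) := fun t => (hadapted t).mono (F.le t) le_rfl
  set N : Ω → ℝ := fun ω => max (-(X 1 ω - X 0 ω)) 0
  have hN : Measurable[F 1] N :=
    ((hadapted 1).sub ((hadapted 0).mono (F.mono zero_le_one) le_rfl)).neg.max
      measurable_const
  have hNm : Measurable N := hN.mono (F.le 1) le_rfl
  have hNβ : ∫⁻ ω, ENNReal.ofReal (N ω ^ β) ∂μ = ⊤ := by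
    simpa only [Measure.restrict_univ] using hneg 0 Set.univ MeasurableSet.univ (by simp)
  set r := (4 * C') ^ α⁻¹
  have hr : 0 < r := by positivity
  set A : ℕ → Set Ω := fun j => N ⁻¹' Set.Ico (r * 2 ^ j) (r * 2 ^ (j + 1))
  have hlarge : ∀ j : ℕ, 4 * C' ≤ (r * 2 ^ j) ^ α := fun j =>
    calc 4 * C' = r ^ α := (Real.rpow_inv_rpow (by positivity) hα.1.ne').symm
      _ ≤ (r * 2 ^ j) ^ α := Real.rpow_le_rpow hr.le
          (le_mul_of_one_le_right hr.le (one_le_pow₀ one_le_two)) hα.1.le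
  have hdrop : ∀ j, ∀ ω ∈ A j, X 1 ω ≤ -(r * 2 ^ j) := fun j ω hω => by
    have := (le_max_iff.1 hω.1).resolve_right (not_le.2 (by positivity))
    linarith [hX0 ω]
  exact lintegral_eq_top_of_tsum_le_mul_setLIntegral (fun j => hNm measurableSet_Ico)
    (pairwise_disjoint_preimage_Ico_mul_two_pow N hr.le)
    (tsum_rpow_mul_measure_preimage_Ico_eq_top hNm (fun _ => le_max_right _ _) hβ.le hr hNβ)
    (ENNReal.mul_ne_top ENNReal.ofNat_ne_top ENNReal.ofReal_ne_top) fun j =>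
      ofReal_rpow_mul_measure_le_setLIntegral_firstPassage hX hX0 hα hposint hC' hC'0 hβ.le hx
        (by positivity) (hlarge j) (hN measurableSet_Ico) (hdrop j)
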